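/- In an MCR game with target t, let v be a vertex and 0 ≤ k ≤ |V| be such that v ∈ Attr_k \ Attr_{k−1} (with the convention Attr_{−1} = ∅). Then for every 0 ≤ j ≤ |V|: (i) if j < k then val_j(v) = +∞, and (ii) if j ≥ k then val_j(v) ≤ j·W. -/

import Mathlib

open Filter

/-- A two-player turn-based weighted game graph. `owner v = true` means that
vertex `v` belongs to player Max, `owner v = false` that it belongs to player Min.
Every vertex has at least one successor. -/
structure Game (V : Type) where
  owner : V → Bool
  E : V → V → Prop
  nonempty : ∀ v, ∃ v', E v v'
  w : V → V → ℤ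

namespace Game

variable {V : Type}

/-- The (reversed) history of the first `k` vertices of `π` (most recent first). -/
def hist (π : ℕ → V) (k : ℕ) : List V := (List.ofFn fun i : Fin k => π i).reverse

/-- A strategy: given the (reversed) list of previously visited vertices and the current
vertex, it picks a successor of the current vertex. -/
structure Strategy (g : Game V) where
  next : List V → V → V
  valid : ∀ h v, g.E v (next h v)

/-- A memoryless strategy only depends on the current vertex. -/
def Strategy.Memoryless {g : Game V} (s : g.Strategy) : Prop :=
  ∀ h h' v, s.next h v = s.next h' v

/-- A finite-memory strategy is one encoded by a deterministic Moore machine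
`⟨M, m0, up, dec⟩`: the choice after a finite play is `dec` applied to the memory state
reached by reading the play (the initial vertex is not read) and to the last vertex. -/
def Strategy.FiniteMemory {g : Game V} (s : g.Strategy) : Prop :=
  ∃ (M : Type) (_ : Fintype M) (m0 : M) (up : M → V → M) (dec : M → V → V),
    ∀ h v, s.next h v = dec (List.foldl up m0 (((h.reverse ++ [v]).drop 1))) v

variable (g : Game V)

/-- Next vertex chosen by the owner of the current vertex. -/
def step (σ τ : g.Strategy) (h : List V) (v : V) : V :=
  if g.owner v then σ.next h v else τ.next h v

/-- Current vertex and reversed history after `k` steps of the play `Play(v, σ, τ)`. -/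
def playAux (σ τ : g.Strategy) (v : V) : ℕ → V × List V
  | 0 => (v, [])
  | k+1 =>
      let p := playAux σ τ v k
      (g.step σ τ p.2 p.1, p.1 :: p.2)

/-- `Play(v, σ, τ)`: the unique play starting in `v` and conforming to the
strategy `σ` of Max and the strategy `τ` of Min. -/
def play (σ τ : g.Strategy) (v : V) (k : ℕ) : V := (g.playAux σ τ v k).1

/-- An infinite sequence of vertices is a play when consecutive vertices are linked
by edges. -/
def IsPlay (π : ℕ → V) : Prop := ∀ k, g.E (π k) (π (k+1))

/-- A play conforms to a strategy `s` of the player `p` if, whenever the current vertex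
belongs to `p`, the next vertex is the one prescribed by `s`. -/
def Conforms (p : Bool) (s : g.Strategy) (π : ℕ → V) : Prop :=
  ∀ k, g.owner (π k) = p → π (k+1) = s.next (hist π k) (π k)

/-- Total-payoff of the prefix of length `k`: the sum of the first `k` edge weights. -/
def TPfin (π : ℕ → V) (k : ℕ) : ℤ := ∑ i ∈ Finset.range k, g.w (π i) (π (i+1))

/-- Total payoff of an infinite play: `liminf` of the payoffs of its prefixes. -/
noncomputable def TP (π : ℕ → V) : EReal :=
  liminf (fun k => (((g.TPfin π k : ℤ) : ℝ) : EReal)) atTop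

/-- Mean payoff of an infinite play. -/
noncomputable def MP (π : ℕ → V) : EReal :=
  liminf (fun k => ((((g.TPfin π k : ℤ) : ℝ) / (k : ℝ)) : EReal)) atTop

open Classical in
/-- Min-cost reachability payoff with target `t`: total payoff up to the first visit
of `t`, and `+∞` if `t` is never visited. -/
noncomputable def MCR (t : V) (π : ℕ → V) : EReal :=
  if h : ∃ k, π k = t then (((g.TPfin π (Nat.find h) : ℤ) : ℝ) : EReal) else ⊤

open Classical in
/-- `MCR` payoff restricted to reaching the target among the first `i+1` vertices. -/
noncomputable def MCRbd (t : V) (i : ℕ) (π : ℕ → V) : EReal :=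
  if ∃ k ≤ i, π k = t then g.MCR t π else ⊤

/-- Value of a strategy `σ` of Max from `v` : `inf_τ P(Play(v, σ, τ))`. -/
noncomputable def valMax (P : (ℕ → V) → EReal) (v : V) (σ : g.Strategy) : EReal :=
  ⨅ τ : g.Strategy, P (g.play σ τ v)

/-- Value of a strategy `τ` of Min from `v` : `sup_σ P(Play(v, σ, τ))`. -/
noncomputable def valMin (P : (ℕ → V) → EReal) (v : V) (τ : g.Strategy) : EReal :=
  ⨆ σ : g.Strategy, P (g.play σ τ v)

/-- Lower value `Val⁻(v) = sup_σ inf_τ P(Play(v, σ, τ))`. -/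
noncomputable def lowerVal (P : (ℕ → V) → EReal) (v : V) : EReal :=
  ⨆ σ : g.Strategy, g.valMax P v σ

/-- Upper value `Val⁺(v) = inf_τ sup_σ P(Play(v, σ, τ))`. -/
noncomputable def upperVal (P : (ℕ → V) → EReal) (v : V) : EReal :=
  ⨅ τ : g.Strategy, g.valMin P v τ

end Game

/-- A min-cost reachability game: a game together with a target vertex `t` whose only
outgoing edge is a self-loop of weight `0`. -/
structure MCRGame (V : Type) extends Game V where
  t : V
  loop : E t t
  loopOnly : ∀ v, E t v → v = t
  loopZero : w t t = 0

/-- The value of a (determined) MCR game. -/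
noncomputable def MCRGame.Val {V : Type} (G : MCRGame V) : V → EReal :=
  fun v => G.toGame.lowerVal (G.toGame.MCR G.t) v

/-- The `i`-step value `val_i(v) = inf_τ sup_σ MCR_i(Play(v, σ, τ))`. -/
noncomputable def MCRGame.ival {V : Type} (G : MCRGame V) (i : ℕ) : V → EReal :=
  fun v => G.toGame.upperVal (G.toGame.MCRbd G.t i) v

/-- The attractor sequence `Attr_i` of the target `t`. -/
def attr {V : Type} (g : Game V) (t : V) : ℕ → Set V
  | 0 => {t}
  | n+1 => attr g t n
      ∪ {v | g.owner v = false ∧ ∃ v', g.E v v' ∧ v' ∈ attr g t n}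
      ∪ {v | g.owner v = true ∧ ∀ v', g.E v v' → v' ∈ attr g t n}

/-! Min's attractor strategy, which from level `i + 1` of the attractor moves to level `i`,
reaches the target from `Attr_k` within `k` steps, and each step costs at most `W`. Dually,
from outside `Attr_(i+1)` Max can always move outside `Attr_i` (a Min vertex there has no
successor in `Attr_i`), so a play from outside `Attr_j` avoids the target for `j` steps. A
single memoryless strategy must serve every level at once: Min picks its successor at the
least level of the current vertex, Max by induction on the bound `j`. -/

lemma mem_of_mem_add_of_step {α : Type*} {π : ℕ → α} {S : ℕ → Set α} {n : ℕ}
    (h : ∀ s i, i < n → π s ∈ S (i + 1) → π (s + 1) ∈ S i) :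
    ∀ s i, s + i ≤ n → π 0 ∈ S (s + i) → π s ∈ S i := by
  intro s
  induction s with
  | zero => intro i _ h0; simpa using h0
  | succ s ih =>
    intro i hn h0
    exact h s i (by omega) (ih (i + 1) (by omega) (by rwa [← Nat.add_assoc, Nat.add_right_comm]))

namespace Game

variable {V : Type} (g : Game V) (t : V)

def Strategy.ofSucc (f : V → V) (hf : ∀ u, g.E u (f u)) : g.Strategy :=
  ⟨fun _ u => f u, fun _ u => hf u⟩

section Play

variable {g} (σ τ : g.Strategy) (v : V) (s : ℕ)

lemma play_zero : g.play σ τ v 0 = v := rfl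

lemma play_succ :
    g.play σ τ v (s + 1) = g.step σ τ (g.playAux σ τ v s).2 (g.play σ τ v s) := rfl

lemma isPlay_play : g.IsPlay (g.play σ τ v) := by
  intro s
  rw [play_succ, step]
  split
  · exact σ.valid _ _
  · exact τ.valid _ _

lemma play_succ_ofSucc_of_max {f : V → V} (hf : ∀ u, g.E u (f u))
    (ho : g.owner (g.play (Strategy.ofSucc g f hf) τ v s) = true) :
    g.play (Strategy.ofSucc g f hf) τ v (s + 1) = f (g.play (Strategy.ofSucc g f hf) τ v s) := by
  rw [play_succ, step, if_pos ho]
  rfl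

lemma play_succ_ofSucc_of_min {f : V → V} (hf : ∀ u, g.E u (f u))
    (ho : g.owner (g.play σ (Strategy.ofSucc g f hf) v s) = false) :
    g.play σ (Strategy.ofSucc g f hf) v (s + 1) = f (g.play σ (Strategy.ofSucc g f hf) v s) := by
  rw [play_succ, step, ho]
  rfl

end Play

lemma attr_mono : Monotone (attr g t) :=
  monotone_nat_of_le_succ fun _ _ hv => Or.inl (Or.inl hv)

lemma mem_attr_self (n : ℕ) : t ∈ attr g t n :=
  attr_mono g t (Nat.zero_le n) rfl

variable {g t}

lemma exists_succ_mem_attr (hloop : g.E t t) {u : V} {i : ℕ} (hu : u ∈ attr g t (i + 1)) :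
    ∃ u', g.E u u' ∧ u' ∈ attr g t i := by
  induction i with
  | zero =>
    rcases hu with (rfl | ⟨_, hsucc⟩) | ⟨_, hall⟩
    · exact ⟨u, hloop, rfl⟩
    · exact hsucc
    · obtain ⟨u', he⟩ := g.nonempty u
      exact ⟨u', he, hall u' he⟩
  | succ i ih =>
    rcases hu with (hu | ⟨_, hsucc⟩) | ⟨_, hall⟩
    · obtain ⟨u', he, hu'⟩ := ih hu
      exact ⟨u', he, attr_mono g t i.le_succ hu'⟩
    · exact hsucc
    · obtain ⟨u', he⟩ := g.nonempty u
      exact ⟨u', he, hall u' he⟩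

lemma succ_mem_attr_of_max (hOnly : ∀ v, g.E t v → v = t) {u u' : V}
    (ho : g.owner u = true) (he : g.E u u') {i : ℕ} (hu : u ∈ attr g t (i + 1)) :
    u' ∈ attr g t i := by
  induction i with
  | zero =>
    rcases hu with (rfl | ⟨hmin, _⟩) | ⟨_, hall⟩
    · exact hOnly u' he
    · simp [hmin] at ho
    · exact hall u' he
  | succ i ih =>
    rcases hu with (hu | ⟨hmin, _⟩) | ⟨_, hall⟩
    · exact attr_mono g t i.le_succ (ih hu)
    · simp [hmin] at ho
    · exact hall u' he

lemma exists_succ_not_mem_attr {u : V} {i : ℕ} (hu : u ∉ attr g t (i + 1)) :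
    ∃ u', g.E u u' ∧ u' ∉ attr g t i := by
  by_contra! hall
  cases ho : g.owner u
  · obtain ⟨u', he⟩ := g.nonempty u
    exact hu (Or.inl (Or.inr ⟨ho, u', he, hall u' he⟩))
  · exact hu (Or.inr ⟨ho, hall⟩)

lemma succ_not_mem_attr_of_min {u u' : V} {i : ℕ} (ho : g.owner u = false) (he : g.E u u')
    (hu : u ∉ attr g t (i + 1)) : u' ∉ attr g t i :=
  fun hu' => hu (Or.inl (Or.inr ⟨ho, u', he, hu'⟩))

lemma exists_succ_forall_mem_attr (hloop : g.E t t) (u : V) :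
    ∃ u', g.E u u' ∧ ∀ i, u ∈ attr g t (i + 1) → u' ∈ attr g t i := by
  classical
  by_cases hex : ∃ i, u ∈ attr g t (i + 1)
  · obtain ⟨u', he, hu'⟩ := exists_succ_mem_attr hloop (Nat.find_spec hex)
    exact ⟨u', he, fun i hi => attr_mono g t (Nat.find_min' hex hi) hu'⟩
  · obtain ⟨u', he⟩ := g.nonempty u
    exact ⟨u', he, fun i hi => (hex ⟨i, hi⟩).elim⟩

lemma exists_succ_forall_not_mem_attr (u : V) :
    ∀ N, ∃ u', g.E u u' ∧ ∀ i < N, u ∉ attr g t (i + 1) → u' ∉ attr g t i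
  | 0 =>
    let ⟨u', he⟩ := g.nonempty u
    ⟨u', he, fun _ hi => absurd hi (Nat.not_lt_zero _)⟩
  | N + 1 => by
    by_cases hu : u ∈ attr g t (N + 1)
    · obtain ⟨u', he, hu'⟩ := exists_succ_forall_not_mem_attr u N
      refine ⟨u', he, fun i hi hui => hu' i ?_ hui⟩
      rcases Nat.lt_succ_iff_lt_or_eq.1 hi with hi | rfl
      exacts [hi, (hui hu).elim]
    · obtain ⟨u', he, hu'⟩ := exists_succ_not_mem_attr hu
      exact ⟨u', he, fun i hi _ hmem => hu' (attr_mono g t (Nat.le_of_lt_succ hi) hmem)⟩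

lemma TPfin_le {W : ℕ} (hW : ∀ v v', g.E v v' → |g.w v v'| ≤ (W : ℤ)) {π : ℕ → V}
    (hπ : g.IsPlay π) (n : ℕ) : g.TPfin π n ≤ n * W :=
  calc g.TPfin π n ≤ ∑ _ ∈ Finset.range n, (W : ℤ) :=
        Finset.sum_le_sum fun i _ => (le_abs_self _).trans (hW _ _ (hπ i))
    _ = n * W := by simp

lemma MCRbd_le {W : ℕ} (hW : ∀ v v', g.E v v' → |g.w v v'| ≤ (W : ℤ)) {π : ℕ → V}
    (hπ : g.IsPlay π) {m j : ℕ} (hm : π m = t) (hmj : m ≤ j) :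
    g.MCRbd t j π ≤ ((((j * W : ℕ) : ℤ) : ℝ) : EReal) := by
  classical
  have hex : ∃ m, π m = t := ⟨m, hm⟩
  rw [MCRbd, if_pos ⟨m, hmj, hm⟩, MCR, dif_pos hex]
  have hfind : Nat.find hex ≤ j := (Nat.find_min' hex hm).trans hmj
  have hTP : g.TPfin π (Nat.find hex) ≤ ((j * W : ℕ) : ℤ) :=
    (TPfin_le hW hπ _).trans (by push_cast; gcongr)
  exact_mod_cast hTP

lemma MCRbd_eq_top {π : ℕ → V} {j : ℕ} (h : ∀ m ≤ j, π m ≠ t) :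
    g.MCRbd t j π = ⊤ := by
  simp only [MCRbd, ite_eq_right_iff]
  exact fun ⟨m, hmj, hm⟩ => (h m hmj hm).elim

end Game

namespace MCRGame

open Game

variable {V : Type} (G : MCRGame V)

noncomputable def attrStrategy : G.Strategy :=
  Strategy.ofSucc _ (fun u => (exists_succ_forall_mem_attr G.loop u).choose)
    fun u => (exists_succ_forall_mem_attr G.loop u).choose_spec.1

noncomputable def avoidStrategy (N : ℕ) : G.Strategy :=
  Strategy.ofSucc _ (fun u => (exists_succ_forall_not_mem_attr (t := G.t) u N).choose)
    fun u => (exists_succ_forall_not_mem_attr u N).choose_spec.1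

lemma play_attrStrategy_eq_target (σ : G.Strategy) (v : V) {k : ℕ}
    (hv : v ∈ attr G.toGame G.t k) : G.play σ G.attrStrategy v k = G.t := by
  have step : ∀ s i, i < k → G.play σ G.attrStrategy v s ∈ attr G.toGame G.t (i + 1) →
      G.play σ G.attrStrategy v (s + 1) ∈ attr G.toGame G.t i := by
    intro s i _ hs
    cases ho : G.owner (G.play σ G.attrStrategy v s)
    · rw [attrStrategy, play_succ_ofSucc_of_min _ _ _ _ ho]
      exact (exists_succ_forall_mem_attr G.loop _).choose_spec.2 i hs
    · exact succ_mem_attr_of_max G.loopOnly ho (isPlay_play _ _ _ s) hs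
  exact mem_of_mem_add_of_step step k 0 le_rfl (by rwa [play_zero])

lemma play_avoidStrategy_ne (τ : G.Strategy) (v : V) {j : ℕ}
    (hv : v ∉ attr G.toGame G.t j) : ∀ m ≤ j, G.play (G.avoidStrategy j) τ v m ≠ G.t := by
  have step : ∀ s i, i < j →
      G.play (G.avoidStrategy j) τ v s ∈ (attr G.toGame G.t (i + 1))ᶜ →
      G.play (G.avoidStrategy j) τ v (s + 1) ∈ (attr G.toGame G.t i)ᶜ := by
    intro s i hij hs
    cases ho : G.owner (G.play (G.avoidStrategy j) τ v s)
    · exact succ_not_mem_attr_of_min ho (isPlay_play _ _ _ s) hs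
    · rw [avoidStrategy, play_succ_ofSucc_of_max _ _ _ _ ho]
      exact (exists_succ_forall_not_mem_attr _ j).choose_spec.2 i hij hs
  intro m hmj hm
  have hout := mem_of_mem_add_of_step (S := fun i => (attr G.toGame G.t i)ᶜ) step m (j - m)
    (by omega) (by rwa [play_zero, Nat.add_sub_cancel' hmj])
  exact hout (hm ▸ mem_attr_self G.toGame G.t (j - m))

end MCRGame

open Game MCRGame in
theorem statement_6_general {V : Type} [Fintype V] (G : MCRGame V) (W : ℕ)
    (hW : ∀ v v', G.E v v' → |G.w v v'| ≤ (W : ℤ))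
    (v : V) (k : ℕ)
    (hv : v ∈ attr G.toGame G.t k)
    (hv' : ∀ j, j < k → v ∉ attr G.toGame G.t j) :
    ∀ j ≤ Fintype.card V,
      (j < k → G.ival j v = ⊤) ∧
      (k ≤ j → G.ival j v ≤ ((((j * W : ℕ) : ℤ) : ℝ) : EReal)) := by
  intro j _
  constructor
  · intro hjk
    refine top_unique (le_iInf fun τ => le_iSup_of_le (G.avoidStrategy j) ?_)
    rw [MCRbd_eq_top (G.play_avoidStrategy_ne τ v (hv' j hjk))]
  · intro hkj
    refine iInf_le_of_le G.attrStrategy (iSup_le fun σ => ?_)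
    exact MCRbd_le hW (isPlay_play _ _ _) (G.play_attrStrategy_eq_target σ v hv) hkj

/-- if `v ∈ Attr_k \ Attr_{k−1}` (with `Attr_{−1} = ∅`), then for every
`j ≤ |V|`: `val_j(v) = +∞` whenever `j < k`, and `val_j(v) ≤ j·W` whenever `j ≥ k`. -/
theorem statement_6 {V : Type} [Fintype V] (G : MCRGame V) (W : ℕ)
    (hW : ∀ v v', G.E v v' → |G.w v v'| ≤ (W : ℤ))
    (v : V) (k : ℕ) (hk : k ≤ Fintype.card V)
    (hv : v ∈ attr G.toGame G.t k)
    (hv' : ∀ j, j < k → v ∉ attr G.toGame G.t j) :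
    ∀ j ≤ Fintype.card V,
      (j < k → G.ival j v = ⊤) ∧
      (k ≤ j → G.ival j v ≤ ((((j * W : ℕ) : ℤ) : ℝ) : EReal)) :=
  statement_6_general G W hW v k hv hv'
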